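/- Let M be a matroid of rank k and let F be a stressed subset of M. The rank function of the relaxation Rel(M,F) is given by: rk'(A) = min(|A|, k) if |A ∩ F| ≥ rk(F)+1, and rk'(A) = rk_M(A) otherwise. -/

import Mathlib

open Set

variable {α : Type*}

/-- The (natural-number valued) rank of a set `X` in a matroid `M`:
the maximum cardinality of an independent subset of `X`. -/
noncomputable def Matroid.nrk (M : Matroid α) (X : Set α) : ℕ :=
  sSup (Set.ncard '' {I | M.Indep I ∧ I ⊆ X})

/-- The rank of the matroid `M`. -/
noncomputable def Matroid.nRank (M : Matroid α) : ℕ := M.nrk M.E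

/-- The cusp of a subset `A` in a matroid `M` of rank `k`:
all `k`-element subsets `S` of the ground set with `|S ∩ A| ≥ rk A + 1`. -/
def Matroid.cusp (M : Matroid α) (A : Set α) : Set (Set α) :=
  {S | S ⊆ M.E ∧ S.ncard = M.nRank ∧ M.nrk A + 1 ≤ (S ∩ A).ncard}

/-- A subset `A` of a matroid `M` is stressed if both the restriction `M | A`
and the contraction `M / A` are uniform matroids; for a finite matroid this is
equivalent to the rank functions of the restriction and of the contraction being
those of uniform matroids. -/
def Matroid.StressedSubset (M : Matroid α) (A : Set α) : Prop :=
  (∀ S ⊆ A, M.nrk S = min S.ncard (M.nrk A)) ∧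
  (∀ Y ⊆ M.E \ A, M.nrk (A ∪ Y) = M.nrk A + min Y.ncard (M.nRank - M.nrk A))

/-!
Relaxing only adds bases, so `M`-independent sets stay independent in `M'`, and all bases of `M'`
have `k` elements. If `|A ∩ F| ≤ rk F`, an `M'`-independent `I ⊆ A` is `M`-independent or lies in
a cusp basis `B`; then `|I ∩ F| ≤ rk F` and `|I \ F| ≤ |B \ F| ≤ k - rk F`. Uniformity of `M | F`
and `M / F` gives `rk (I ∩ F) = |I ∩ F|` and `rk (I ∪ F) = rk F + |I \ F|`, so submodularity forces
`rk I = |I|`. If `|A ∩ F| > rk F` and `rk F < k`, a subset of `A` of size `min(|A|, k)` containing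
`rk F + 1` elements of `F` extends to a cusp basis; if `rk F = k`, already `A ∩ F` has rank `k`.
-/

namespace Matroid

variable {M M' N : Matroid α} {F I A S B X Y : Set α}

section nrk

variable [M.RankFinite]

lemma cast_nrk (X : Set α) : (M.nrk X : ℕ∞) = M.eRk X := by
  obtain ⟨I, hI⟩ := M.exists_isBasis' X
  have hIfin : I.Finite := hI.indep.finite
  suffices IsGreatest (Set.ncard '' {J | M.Indep J ∧ J ⊆ X}) I.ncard by
    rw [nrk, this.csSup_eq, hIfin.cast_ncard_eq, hI.encard_eq_eRk]
  refine ⟨⟨I, ⟨hI.indep, hI.subset⟩, rfl⟩, ?_⟩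
  rintro _ ⟨J, ⟨hJ, hJX⟩, rfl⟩
  have hle := hJ.encard_le_eRk_of_subset hJX
  rwa [← hI.encard_eq_eRk, ← hJ.finite.cast_ncard_eq, ← hIfin.cast_ncard_eq,
    Nat.cast_le] at hle

lemma nrk_mono (hXY : X ⊆ Y) : M.nrk X ≤ M.nrk Y := by
  have hle := M.eRk_mono hXY
  rwa [← cast_nrk, ← cast_nrk, Nat.cast_le] at hle

lemma nrk_le_nRank (X : Set α) : M.nrk X ≤ M.nRank := by
  have hle := M.eRk_le_eRank X
  rwa [eRank_def, ← cast_nrk, ← cast_nrk, Nat.cast_le] at hle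

lemma nrk_le_ncard (hX : X.Finite) : M.nrk X ≤ X.ncard := by
  have hle := M.eRk_le_encard X
  rwa [← cast_nrk, ← hX.cast_ncard_eq, Nat.cast_le] at hle

lemma Indep.ncard_le_nrk (hI : M.Indep I) (hIX : I ⊆ X) : I.ncard ≤ M.nrk X := by
  have hle := hI.encard_le_eRk_of_subset hIX
  rwa [← cast_nrk, ← hI.finite.cast_ncard_eq, Nat.cast_le] at hle

lemma IsBase.ncard_eq_nRank (hB : M.IsBase B) : B.ncard = M.nRank := by
  have h := hB.encard_eq_eRank
  rwa [eRank_def, ← cast_nrk, ← hB.finite.cast_ncard_eq, Nat.cast_inj] at h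

lemma indep_of_ncard_le_nrk (hX : X.Finite) (h : X.ncard ≤ M.nrk X) : M.Indep X := by
  rw [indep_iff_eRk_eq_encard_of_finite hX, ← cast_nrk, ← hX.cast_ncard_eq, Nat.cast_inj]
  exact (nrk_le_ncard hX).antisymm h

lemma nrk_union_add_nrk_inter_le (X Y : Set α) :
    M.nrk (X ∪ Y) + M.nrk (X ∩ Y) ≤ M.nrk X + M.nrk Y := by
  have hle := M.eRk_inter_add_eRk_union_le X Y
  rw [← cast_nrk, ← cast_nrk, ← cast_nrk, ← cast_nrk, add_comm] at hle
  exact_mod_cast hle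

lemma nrk_le_nrk_of_indep_imp [N.RankFinite] (h : ∀ I ⊆ X, M.Indep I → N.Indep I) :
    M.nrk X ≤ N.nrk X := by
  obtain ⟨I, hI⟩ := M.exists_isBasis' X
  have hIX : M.nrk X = I.ncard := by
    rw [← Nat.cast_inj (R := ℕ∞), cast_nrk, hI.indep.finite.cast_ncard_eq, hI.encard_eq_eRk]
  exact hIX ▸ (h I hI.subset hI.indep).ncard_le_nrk hI.subset

end nrk

lemma StressedSubset.indep_of_ncard_le [M.Finite] (hstr : M.StressedSubset F) (hS : S ⊆ M.E)
    (hSF : (S ∩ F).ncard ≤ M.nrk F) (hSF' : (S \ F).ncard ≤ M.nRank - M.nrk F) :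
    M.Indep S := by
  have hSfin : S.Finite := M.ground_finite.subset hS
  have hinter : M.nrk (S ∩ F) = (S ∩ F).ncard := by
    rw [hstr.1 _ inter_subset_right, min_eq_left hSF]
  have hunion : M.nrk (S ∪ F) = M.nrk F + (S \ F).ncard := by
    rw [union_comm S F, ← union_sdiff_self, hstr.2 _ (sdiff_subset_sdiff_left hS),
      min_eq_left hSF']
  have hsubmod := M.nrk_union_add_nrk_inter_le S F
  have hsplit := ncard_inter_add_ncard_sdiff_eq_ncard S F hSfin
  exact M.indep_of_ncard_le_nrk hSfin (by omega)

def IsRelaxation (M' M : Matroid α) (F : Set α) : Prop :=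
  ∀ B, M'.IsBase B ↔ M.IsBase B ∨ B ∈ M.cusp F

lemma IsRelaxation.ncard_eq_nRank_of_isBase [M.Finite] (h : M'.IsRelaxation M F)
    (hB : M'.IsBase B) : B.ncard = M.nRank := by
  obtain hBM | ⟨-, hcard, -⟩ := (h B).1 hB
  exacts [hBM.ncard_eq_nRank, hcard]

lemma IsRelaxation.rankFinite [M.Finite] (h : M'.IsRelaxation M F) : M'.RankFinite := by
  obtain ⟨B, hB⟩ := M'.exists_isBase
  obtain hBM | ⟨hBE, -, -⟩ := (h B).1 hB
  exacts [hB.rankFinite_of_finite hBM.finite, hB.rankFinite_of_finite (M.ground_finite.subset hBE)]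

lemma IsRelaxation.nRank_eq [M.Finite] (h : M'.IsRelaxation M F) : M'.nRank = M.nRank := by
  have := h.rankFinite
  obtain ⟨B, hB⟩ := M'.exists_isBase
  rw [← hB.ncard_eq_nRank, h.ncard_eq_nRank_of_isBase hB]

lemma IsRelaxation.indep (h : M'.IsRelaxation M F) (hI : M.Indep I) : M'.Indep I := by
  obtain ⟨B, hB, hIB⟩ := hI.exists_isBase_superset
  exact ((h B).2 (Or.inl hB)).indep.subset hIB

lemma IsRelaxation.indep_of_ncard_inter_le [M.Finite] (h : M'.IsRelaxation M F)
    (hstr : M.StressedSubset F) (hI : M'.Indep I) (hIF : (I ∩ F).ncard ≤ M.nrk F) :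
    M.Indep I := by
  obtain ⟨B, hB, hIB⟩ := hI.exists_isBase_superset
  obtain hBM | ⟨hBE, hBcard, hBF⟩ := (h B).1 hB
  · exact hBM.indep.subset hIB
  have hBfin : B.Finite := M.ground_finite.subset hBE
  have hsplit := ncard_inter_add_ncard_sdiff_eq_ncard B F hBfin
  have hdiff : (I \ F).ncard ≤ (B \ F).ncard :=
    ncard_le_ncard (sdiff_subset_sdiff_left hIB) hBfin.sdiff
  exact hstr.indep_of_ncard_le (hIB.trans hBE) hIF (by omega)

lemma nRank_le_ncard_ground [M.Finite] : M.nRank ≤ M.E.ncard := by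
  obtain ⟨B, hB⟩ := M.exists_isBase
  exact hB.ncard_eq_nRank ▸ ncard_le_ncard hB.subset_ground M.ground_finite

lemma exists_subset_subset_mem_cusp [M.Finite] (hA : A ⊆ M.E)
    (hAF : M.nrk F + 1 ≤ (A ∩ F).ncard) (hF : M.nrk F < M.nRank) :
    ∃ S ⊆ A, S.ncard = min A.ncard M.nRank ∧ ∃ B ∈ M.cusp F, S ⊆ B := by
  have hAfin : A.Finite := M.ground_finite.subset hA
  obtain ⟨T, hTAF, hTcard⟩ := exists_subset_card_eq hAF
  have hTmin : T.ncard ≤ min A.ncard M.nRank :=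
    hTcard ▸ le_min (hAF.trans (ncard_le_ncard inter_subset_left hAfin)) hF
  obtain ⟨S, hTS, hSA, hScard⟩ :=
    exists_subsuperset_card_eq (hTAF.trans inter_subset_left) hTmin (min_le_left _ _)
  obtain ⟨B, hSB, hBE, hBcard⟩ := exists_subsuperset_card_eq (hSA.trans hA)
    (hScard.trans_le (min_le_right _ _)) nRank_le_ncard_ground
  have hTBF : T ⊆ B ∩ F := subset_inter (hTS.trans hSB) (hTAF.trans inter_subset_right)
  refine ⟨S, hSA, hScard, B, ⟨hBE, hBcard, ?_⟩, hSB⟩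
  exact hTcard ▸ ncard_le_ncard hTBF ((M.ground_finite.subset hBE).subset inter_subset_left)

lemma IsRelaxation.min_ncard_nRank_le_nrk [M.Finite] (h : M'.IsRelaxation M F)
    (hstr : M.StressedSubset F) (hA : A ⊆ M.E) (hAF : M.nrk F + 1 ≤ (A ∩ F).ncard) :
    min A.ncard M.nRank ≤ M'.nrk A := by
  have := h.rankFinite
  obtain hF | hF := (M.nrk_le_nRank F).lt_or_eq
  · obtain ⟨S, hSA, hScard, B, hBcusp, hSB⟩ := exists_subset_subset_mem_cusp hA hAF hF
    exact hScard ▸ (((h B).2 (Or.inr hBcusp)).indep.subset hSB).ncard_le_nrk hSA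
  · -- the cusp is empty, but `A ∩ F` alone has full rank
    have hAFrk : M.nrk (A ∩ F) = M.nRank := by
      rw [hstr.1 _ inter_subset_right, hF, min_eq_right (by omega)]
    calc min A.ncard M.nRank ≤ M.nrk (A ∩ F) := hAFrk ▸ min_le_right _ _
      _ ≤ M.nrk A := nrk_mono inter_subset_left
      _ ≤ M'.nrk A := nrk_le_nrk_of_indep_imp fun _ _ hI => h.indep hI

end Matroid

theorem relaxation_rank_general (M M' : Matroid α) (hfin : M.E.Finite) {F : Set α}
    (hstr : M.StressedSubset F)
    (hB : ∀ B, M'.IsBase B ↔ M.IsBase B ∨ B ∈ M.cusp F) {A : Set α} (hA : A ⊆ M.E) :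
    (M.nrk F + 1 ≤ (A ∩ F).ncard → M'.nrk A = min A.ncard M.nRank) ∧
    ((A ∩ F).ncard ≤ M.nrk F → M'.nrk A = M.nrk A) := by
  have : M.Finite := ⟨hfin⟩
  have hrel : M'.IsRelaxation M F := hB
  have := hrel.rankFinite
  have hAfin : A.Finite := hfin.subset hA
  refine ⟨fun hAF => le_antisymm ?_ (hrel.min_ncard_nRank_le_nrk hstr hA hAF), fun hAF => ?_⟩
  · exact le_min (M'.nrk_le_ncard hAfin) ((M'.nrk_le_nRank A).trans_eq hrel.nRank_eq)
  · refine le_antisymm (Matroid.nrk_le_nrk_of_indep_imp fun I hIA hI => ?_)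
      (Matroid.nrk_le_nrk_of_indep_imp fun _ _ hI => hrel.indep hI)
    have hIF : (I ∩ F).ncard ≤ (A ∩ F).ncard :=
      ncard_le_ncard (inter_subset_inter_left F hIA) (hAfin.subset inter_subset_left)
    exact hrel.indep_of_ncard_inter_le hstr hI (hIF.trans hAF)

/-- rank function of the relaxation `Rel(M,F)` of a stressed subset `F`:
`rk'(A) = min(|A|, k)` when `|A ∩ F| ≥ rk F + 1`, and `rk'(A) = rk_M(A)` otherwise. -/
theorem relaxation_rank (M M' : Matroid α) (hfin : M.E.Finite) {F : Set α}
    (hF : F ⊆ M.E) (hstr : M.StressedSubset F) (hE' : M'.E = M.E)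
    (hB : ∀ B, M'.IsBase B ↔ M.IsBase B ∨ B ∈ M.cusp F) {A : Set α} (hA : A ⊆ M.E) :
    (M.nrk F + 1 ≤ (A ∩ F).ncard → M'.nrk A = min A.ncard M.nRank) ∧
    ((A ∩ F).ncard ≤ M.nrk F → M'.nrk A = M.nrk A) :=
  relaxation_rank_general M M' hfin hstr hB hA
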